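/- arXiv:2006.08354 — 2 statements merged into one kernel-verified Lean document; each statement's English description precedes it below -/
import Mathlib

section
/- Let H be a Hilbert C*-module over a unital C*-algebra A, K ∈ End*_A(H), C ∈ GL⁺(H) with KC = CK, R(C^{1/2}) ⊆ R(K*C^{1/2}) where R(K*C^{1/2}) is closed. If F : Ω → H is a continuous C-controlled K-frame with bounds A₀ and B₀, then F is a continuous K-frame for H, i.e. there exist constants a, b > 0 with a⟨K*f,K*f⟩ ≤ ∫_Ω ⟨f,F(w)⟩⟨F(w),f⟩ dμ(w) ≤ b⟨f,f⟩ for all f ∈ H; moreover one may take a = A₀‖C^{-1/2}‖^{-2}‖C^{1/2}‖^{-2} and b = B₀‖C^{-1/2}‖². -/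
open MeasureTheory CStarModule
open scoped RightActions

/-- The Hilbert C⋆-module class as in Mathlib of December 2024 (right `Aᵐᵒᵖ`-action,
`⟪x, y <• a⟫ = ⟪x, y⟫ * a`); Mathlib's `CStarModule` now uses a left action with another
convention. -/
class RightCStarModule (A : outParam <| Type*) (E : Type*) [NonUnitalSemiring A] [StarRing A]
    [Module ℂ A] [AddCommGroup E] [Module ℂ E] [PartialOrder A] [SMul Aᵐᵒᵖ E] [Norm A] [Norm E]
    extends Inner A E where
  inner_add_right {x} {y} {z} : inner x (y + z) = inner x y + inner x z
  inner_self_nonneg {x} : 0 ≤ inner x x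
  inner_self {x} : inner x x = 0 ↔ x = 0
  inner_op_smul_right {a : A} {x y : E} : inner x (y <• a) = inner x y * a
  inner_smul_right_complex {z : ℂ} {x} {y} : inner x (z • y) = z • inner x y
  star_inner x y : star (inner x y) = inner y x
  norm_eq_sqrt_norm_inner_self x : ‖x‖ = √‖inner x x‖

/-!
Let `J g h = ∫ ⟪g, F w⟫ ⟪F w, h⟫ dμ(w)`, a positive `A`-valued sesquilinear form; the controlled
frame integral is `J (C f) f`, which is positive by the lower frame bound.

For a positive sesquilinear form `B` and a bounded operator `T` with `0 ≤ B (T x) x`, `T` is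
`B`-symmetric and `B (T x) x ≤ ‖T‖ • B x x`. Indeed the moments `W k = B (T ^ k x) x` are positive,
satisfy `0 ≤ t² W (m + 2) + 2t W (m + 1) + W m` and grow like `‖T‖ ^ k`, which forces
`W 1 ≤ ‖T‖ • W 0`; this stands in for the square root of the frame operator, which need not exist.

Applied to `(J, C)`, `(J (C ·) ·, C⁻¹)` and `(⟪C ·, ·⟫, C⁻¹)` this gives `J (C f) f ≤ ‖C‖ J f f`,
`J f f ≤ ‖C⁻¹‖ J (C f) f` and `⟪g, g⟫ ≤ ‖C⁻¹‖ ⟪C g, g⟫`; finally `‖C^{±1}‖ ≤ ‖C^{±1/2}‖²`.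
-/

open Filter Topology

section Moments

variable {A : Type*} [CStarAlgebra A] [PartialOrder A] [StarOrderedRing A]

theorem le_smul_of_moments_of_lt (W : ℕ → A) {β β' K : ℝ} (hβ : 0 ≤ β) (hβ' : β < β')
    (hW : ∀ m, 0 ≤ W m)
    (hquad : ∀ m (t : ℝ), 0 ≤ t ^ 2 • W (m + 2) + (2 * t) • W (m + 1) + W m)
    (hgrowth : ∀ n, ‖W (2 * n)‖ ≤ K * β ^ (2 * n)) :
    W 1 ≤ β' • W 0 := by
  have hβ'0 : 0 < β' := hβ.trans_lt hβ'
  set D : ℕ → A := fun m => W (m + 1) - β' • W m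
  -- the quadratic at `t = -1/β'` says that `D` grows at least geometrically with ratio `β'`
  have hstep (m : ℕ) : β' • D m ≤ D (m + 1) := by
    have h := smul_nonneg (sq_nonneg β') (hquad m (-β'⁻¹))
    rw [← sub_nonneg]
    convert h using 1
    match_scalars
    · field_simp
    · field_simp
      ring
    · ring
  have hchain (n : ℕ) : β' ^ n • D 0 ≤ D n := by
    induction n with
    | zero => simp
    | succ n ih =>
      calc β' ^ (n + 1) • D 0 = β' • β' ^ n • D 0 := by rw [smul_smul, pow_succ']
        _ ≤ β' • D n := smul_le_smul_of_nonneg_left ih hβ'0.le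
        _ ≤ D (n + 1) := hstep n
  have hbound (n : ℕ) : D 0 ≤ (K * β * (β / β') * ((β / β') ^ 2) ^ n) • (1 : A) := by
    have hD : D (2 * n + 1) ≤ (K * β ^ (2 * (n + 1))) • (1 : A) :=
      calc D (2 * n + 1) ≤ W (2 * (n + 1)) := sub_le_self _ (smul_nonneg hβ'0.le (hW _))
        _ ≤ ‖W (2 * (n + 1))‖ • (1 : A) := by
            simpa [Algebra.algebraMap_eq_smul_one] using
              (IsSelfAdjoint.of_nonneg (hW _)).le_algebraMap_norm_self
        _ ≤ (K * β ^ (2 * (n + 1))) • (1 : A) :=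
            smul_le_smul_of_nonneg_right (hgrowth _) zero_le_one
    have h := smul_le_smul_of_nonneg_left ((hchain _).trans hD)
      (inv_nonneg.mpr (pow_nonneg hβ'0.le (2 * n + 1)))
    rw [smul_smul, smul_smul, inv_mul_cancel₀ (pow_ne_zero _ hβ'0.ne'), one_smul] at h
    convert h using 2
    rw [div_pow, div_pow, ← pow_mul, ← pow_mul]
    field_simp
    ring
  have hlim : Tendsto (fun n : ℕ => (K * β * (β / β') * ((β / β') ^ 2) ^ n) • (1 : A))
      atTop (𝓝 0) := by
    have hr : (β / β') ^ 2 < 1 :=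
      pow_lt_one₀ (by positivity) ((div_lt_one hβ'0).mpr hβ') two_ne_zero
    simpa using ((tendsto_pow_atTop_nhds_zero_of_lt_one (by positivity) hr).const_mul
      (K * β * (β / β'))).smul_const (1 : A)
  exact sub_nonpos.mp (ge_of_tendsto' hlim hbound)

theorem le_smul_of_moments (W : ℕ → A) {β K : ℝ} (hβ : 0 ≤ β) (hW : ∀ m, 0 ≤ W m)
    (hquad : ∀ m (t : ℝ), 0 ≤ t ^ 2 • W (m + 2) + (2 * t) • W (m + 1) + W m)
    (hgrowth : ∀ n, ‖W (2 * n)‖ ≤ K * β ^ (2 * n)) :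
    W 1 ≤ β • W 0 := by
  have hlim : Tendsto (fun s : ℝ => s • W 0) (𝓝[>] β) (𝓝 (β • W 0)) :=
    (continuous_id.smul continuous_const).continuousWithinAt.tendsto
  exact ge_of_tendsto hlim (eventually_nhdsWithin_of_forall fun _ hβ' =>
    le_smul_of_moments_of_lt W hβ hβ' hW hquad hgrowth)

end Moments

namespace LinearMap

section Algebraic

variable {H : Type*} [AddCommGroup H] [Module ℂ H]

theorem polarization_sesq {E : Type*} [AddCommGroup E] [Module ℂ E]
    (B : H →ₗ⋆[ℂ] H →ₗ[ℂ] E) (x y : H) :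
    B x y = (4 : ℂ)⁻¹ • (B (x + y) (x + y) - B (x - y) (x - y)
      - Complex.I • B (x + Complex.I • y) (x + Complex.I • y)
      + Complex.I • B (x - Complex.I • y) (x - Complex.I • y)) := by
  simp only [map_add, map_sub, map_smulₛₗ, add_apply, sub_apply, smul_apply,
    Complex.conj_I, RingHom.id_apply]
  match_scalars <;> ring_nf <;> norm_num [Complex.I_sq]

theorem star_apply_of_isSelfAdjoint_apply_self {E : Type*} [AddCommGroup E] [Module ℂ E]
    [StarAddMonoid E] [StarModule ℂ E] (B : H →ₗ⋆[ℂ] H →ₗ[ℂ] E)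
    (hB : ∀ x, IsSelfAdjoint (B x x)) (x y : H) : star (B x y) = B y x := by
  have h₁ := (hB (x + y)).star_eq
  have h₂ := (hB (x + Complex.I • y)).star_eq
  simp only [map_add, map_smulₛₗ, add_apply, smul_apply, star_add, star_smul,
    (hB x).star_eq, (hB y).star_eq, Complex.star_def, Complex.conj_I, map_neg, neg_neg,
    RingHom.id_apply] at h₁ h₂
  linear_combination (norm := match_scalars <;> ring_nf <;> norm_num [Complex.I_sq])
    (1 / 2 : ℂ) • h₁ + (Complex.I / 2) • h₂

variable {A : Type*} [CStarAlgebra A] [PartialOrder A] [StarOrderedRing A]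

theorem apply_map_eq_of_nonneg (B : H →ₗ⋆[ℂ] H →ₗ[ℂ] A) (T : H →ₗ[ℂ] H)
    (hB : ∀ x, 0 ≤ B x x) (hBT : ∀ x, 0 ≤ B (T x) x) (x y : H) : B (T x) y = B x (T y) := by
  calc B (T x) y = star (B (T y) x) :=
        (star_apply_of_isSelfAdjoint_apply_self (B.comp T) (fun z => .of_nonneg (hBT z)) y x).symm
    _ = B x (T y) := star_apply_of_isSelfAdjoint_apply_self B (fun z => .of_nonneg (hB z)) _ _

end Algebraic

section Normed

variable {A : Type*} [CStarAlgebra A] [PartialOrder A] [StarOrderedRing A]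
variable {H : Type*} [NormedAddCommGroup H] [NormedSpace ℂ H]

theorem apply_pow_apply_pow {E : Type*} [AddCommGroup E] [Module ℂ E]
    (B : H →ₗ⋆[ℂ] H →ₗ[ℂ] E) (T : H →L[ℂ] H) (hT : ∀ x y, B (T x) y = B x (T y))
    (i j : ℕ) (x y : H) : B ((T ^ i) x) ((T ^ j) y) = B ((T ^ (i + j)) x) y := by
  induction j generalizing i with
  | zero => simp
  | succ j ih =>
    rw [pow_succ', mul_apply_eq_comp, ← hT, ← mul_apply_eq_comp, ← pow_succ', ih]
    ring_nf

theorem apply_map_self_le_opNorm_smul (B : H →ₗ⋆[ℂ] H →ₗ[ℂ] A) (T : H →L[ℂ] H) {M : ℝ}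
    (hM : 0 ≤ M) (hB : ∀ x, 0 ≤ B x x) (hBM : ∀ x, ‖B x x‖ ≤ M * ‖x‖ ^ 2)
    (hBT : ∀ x, 0 ≤ B (T x) x) (x : H) :
    B (T x) x ≤ ‖T‖ • B x x := by
  set W : ℕ → A := fun k => B ((T ^ k) x) x
  have hW (i j : ℕ) : B ((T ^ i) x) ((T ^ j) x) = W (i + j) :=
    apply_pow_apply_pow B T (apply_map_eq_of_nonneg B (T : H →ₗ[ℂ] H) hB hBT) i j x x
  have hpow : ∀ e ≤ 1, ∀ y, 0 ≤ B ((T ^ e) y) y := by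
    intro e he y
    interval_cases e <;> simp [hB, hBT]
  have hpow_apply : ∀ i j, (T ^ i) ((T ^ j) x) = (T ^ (i + j)) x := fun i j => by
    rw [← mul_apply_eq_comp, ← pow_add]
  have hnonneg : ∀ m, 0 ≤ W m := by
    intro m
    obtain ⟨a, e, he, rfl⟩ : ∃ a e, e ≤ 1 ∧ m = e + a + a := ⟨m / 2, m % 2, by omega, by omega⟩
    simpa only [hpow_apply, hW] using hpow e he ((T ^ a) x)
  have hquad : ∀ m (t : ℝ), 0 ≤ t ^ 2 • W (m + 2) + (2 * t) • W (m + 1) + W m := by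
    intro m t
    obtain ⟨a, e, he, rfl⟩ : ∃ a e, e ≤ 1 ∧ m = e + a + a := ⟨m / 2, m % 2, by omega, by omega⟩
    have h := hpow e he ((t : ℂ) • (T ^ (a + 1)) x + (T ^ a) x)
    simp only [map_add, map_smul, map_smulₛₗ, add_apply, smul_apply, hpow_apply, hW,
      Complex.conj_ofReal] at h
    convert h using 1
    rw [show e + (a + 1) + (a + 1) = e + a + a + 2 by omega,
      show e + (a + 1) + a = e + a + a + 1 by omega, show e + a + (a + 1) = e + a + a + 1 by omega]
    match_scalars <;> simp only [Complex.coe_algebraMap] <;> ring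
  have hgrowth : ∀ n, ‖W (2 * n)‖ ≤ M * ‖x‖ ^ 2 * ‖T‖ ^ (2 * n) := by
    intro n
    have hTn : ‖(T ^ n) x‖ ≤ ‖T‖ ^ n * ‖x‖ := by
      rcases n.eq_zero_or_pos with rfl | hn
      · simp
      · exact ((T ^ n).le_opNorm x).trans
          (mul_le_mul_of_nonneg_right (norm_pow_le' T hn) (norm_nonneg x))
    calc ‖W (2 * n)‖ = ‖B ((T ^ n) x) ((T ^ n) x)‖ := by rw [hW, two_mul]
      _ ≤ M * ‖(T ^ n) x‖ ^ 2 := hBM _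
      _ ≤ M * (‖T‖ ^ n * ‖x‖) ^ 2 := by gcongr
      _ = M * ‖x‖ ^ 2 * ‖T‖ ^ (2 * n) := by ring
  simpa [W] using le_smul_of_moments W (norm_nonneg T) hnonneg hquad hgrowth

theorem apply_self_le_opNorm_smul_apply_map (B : H →ₗ⋆[ℂ] H →ₗ[ℂ] A) (T S : H →L[ℂ] H)
    (hTS : ∀ x, T (S x) = x) {M : ℝ} (hM : 0 ≤ M) (hB : ∀ x, 0 ≤ B x x)
    (hBT : ∀ x, 0 ≤ B (T x) x) (hBTM : ∀ x, ‖B (T x) x‖ ≤ M * ‖x‖ ^ 2) (x : H) :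
    B x x ≤ ‖S‖ • B (T x) x := by
  simpa [hTS] using apply_map_self_le_opNorm_smul (B.comp (T : H →ₗ[ℂ] H)) S hM hBT hBTM
    (fun x => by simpa [hTS] using hB x) x

end Normed

end LinearMap

section Integral

variable {Ω : Type*} [MeasurableSpace Ω] {H : Type*} [AddCommGroup H] [Module ℂ H]
  {E : Type*} [NormedAddCommGroup E] [NormedSpace ℂ E]

theorem integrable_sesq_apply_of_integrable_apply_self {μ : Measure Ω}
    {Φ : Ω → H →ₗ⋆[ℂ] H →ₗ[ℂ] E} (hΦ : ∀ x, Integrable (fun w => Φ w x x) μ) (x y : H) :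
    Integrable (fun w => Φ w x y) μ := by
  simp_rw [LinearMap.polarization_sesq (Φ _) x y]
  exact ((((hΦ _).sub (hΦ _)).sub ((hΦ _).smul _)).add ((hΦ _).smul _)).smul _

noncomputable def sesqIntegral (Φ : Ω → H →ₗ⋆[ℂ] H →ₗ[ℂ] E) (μ : Measure Ω)
    (hΦ : ∀ x, Integrable (fun w => Φ w x x) μ) : H →ₗ⋆[ℂ] H →ₗ[ℂ] E :=
  have hint := integrable_sesq_apply_of_integrable_apply_self hΦ
  LinearMap.mk₂'ₛₗ _ _ (fun x y => ∫ w, Φ w x y ∂μ)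
    (fun x x' y => by simp only [map_add, LinearMap.add_apply, integral_add (hint x y) (hint x' y)])
    (fun c x y => by simp only [map_smulₛₗ, LinearMap.smul_apply, integral_smul])
    (fun x y y' => by simp only [map_add, integral_add (hint x y) (hint x y')])
    (fun c x y => by simp only [map_smul, integral_smul, RingHom.id_apply])

end Integral

namespace RightCStarModule

variable {A : Type*} [CStarAlgebra A] [PartialOrder A]
  {H : Type*} [NormedAddCommGroup H] [NormedSpace ℂ H] [SMul Aᵐᵒᵖ H] [RightCStarModule A H]

local notation "⟪" x ", " y "⟫" => inner (𝕜 := A) x y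

theorem inner_add_left {x y z : H} : ⟪x + y, z⟫ = ⟪x, z⟫ + ⟪y, z⟫ := by
  rw [← star_inner z, inner_add_right, star_add, star_inner, star_inner]

theorem inner_smul_left_complex {c : ℂ} {x y : H} : ⟪c • x, y⟫ = star c • ⟪x, y⟫ := by
  rw [← star_inner y, inner_smul_right_complex, star_smul, star_inner]

theorem norm_inner_self (x : H) : ‖⟪x, x⟫‖ = ‖x‖ ^ 2 := by
  rw [norm_eq_sqrt_norm_inner_self (A := A) x, Real.sq_sqrt (norm_nonneg _)]

variable (A) in
noncomputable def innerₛₗ : H →ₗ⋆[ℂ] H →ₗ[ℂ] A :=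
  LinearMap.mk₂'ₛₗ _ _ (fun x y => ⟪x, y⟫) (fun _ _ _ => inner_add_left)
    (fun _ _ _ => inner_smul_left_complex) (fun _ _ _ => inner_add_right)
    (fun _ _ _ => inner_smul_right_complex)

@[simp]
theorem innerₛₗ_apply (x y : H) : innerₛₗ A x y = ⟪x, y⟫ :=
  rfl

variable {Ω : Type*} [MeasurableSpace Ω]

noncomputable def frameForm (μ : Measure Ω) (F : Ω → H)
    (hF : ∀ f, Integrable (fun w => ⟪f, F w⟫ * ⟪F w, f⟫) μ) : H →ₗ⋆[ℂ] H →ₗ[ℂ] A :=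
  sesqIntegral (fun w => LinearMap.mk₂'ₛₗ _ _ (fun g h => ⟪g, F w⟫ * ⟪F w, h⟫)
    (fun _ _ _ => by rw [inner_add_left, add_mul])
    (fun _ _ _ => by rw [inner_smul_left_complex, smul_mul_assoc]; rfl)
    (fun _ _ _ => by rw [inner_add_right, mul_add])
    (fun _ _ _ => by rw [inner_smul_right_complex, mul_smul_comm]; rfl)) μ hF

theorem frameForm_apply (μ : Measure Ω) (F : Ω → H)
    (hF : ∀ f, Integrable (fun w => ⟪f, F w⟫ * ⟪F w, f⟫) μ) (g h : H) :
    frameForm μ F hF g h = ∫ w, ⟪g, F w⟫ * ⟪F w, h⟫ ∂μ :=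
  rfl

theorem integral_inner_map_mul_inner (μ : Measure Ω) (F : Ω → H)
    (hF : ∀ f, Integrable (fun w => ⟪f, F w⟫ * ⟪F w, f⟫) μ) (C : H →L[ℂ] H)
    (hC : ∀ x y, ⟪C x, y⟫ = ⟪x, C y⟫) (f : H) :
    ∫ w, ⟪f, C (F w)⟫ * ⟪F w, f⟫ ∂μ = frameForm μ F hF (C f) f := by
  simp_rw [frameForm_apply, hC]

variable [StarOrderedRing A]

theorem inner_self_le_opNorm_smul_inner_map (C S R : H →L[ℂ] H) (hCS : ∀ x, C (S x) = x)
    (hR : ∀ x, ⟪R x, R x⟫ = ⟪C x, x⟫) (x : H) : ⟪x, x⟫ ≤ ‖S‖ • ⟪C x, x⟫ :=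
  (innerₛₗ A).apply_self_le_opNorm_smul_apply_map C S hCS (sq_nonneg ‖R‖)
    (fun _ => inner_self_nonneg) (fun y => by rw [innerₛₗ_apply, ← hR]; exact inner_self_nonneg)
    (fun y => by
      rw [innerₛₗ_apply, ← hR, norm_inner_self, ← mul_pow]
      gcongr
      exact R.le_opNorm y) x

theorem norm_le_of_le_smul_inner_self {a : A} {r : ℝ} {x : H} (hr : 0 ≤ r) (ha : 0 ≤ a)
    (h : a ≤ r • ⟪x, x⟫) : ‖a‖ ≤ r * ‖x‖ ^ 2 := by
  simpa [norm_smul, norm_inner_self, abs_of_nonneg hr] using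
    CStarAlgebra.norm_le_norm_of_nonneg_of_le ha h

theorem apply_self_le_smul_inner_self_of_controlled (J : H →ₗ⋆[ℂ] H →ₗ[ℂ] A)
    (C S : H →L[ℂ] H) (hCS : ∀ x, C (S x) = x) {B₀ : ℝ} (hB₀ : 0 ≤ B₀) (hJ : ∀ x, 0 ≤ J x x)
    (hJC : ∀ x, 0 ≤ J (C x) x) (hJCB : ∀ x, J (C x) x ≤ B₀ • ⟪x, x⟫) (x : H) :
    J x x ≤ (‖S‖ * B₀) • ⟪x, x⟫ := by
  rw [mul_smul]
  exact (J.apply_self_le_opNorm_smul_apply_map C S hCS hB₀ hJ hJC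
    (fun y => norm_le_of_le_smul_inner_self hB₀ (hJC y) (hJCB y)) x).trans
    (smul_le_smul_of_nonneg_left (hJCB x) (norm_nonneg S))

theorem apply_map_self_le_opNorm_smul_of_controlled (J : H →ₗ⋆[ℂ] H →ₗ[ℂ] A)
    (C S : H →L[ℂ] H) (hCS : ∀ x, C (S x) = x) {B₀ : ℝ} (hB₀ : 0 ≤ B₀) (hJ : ∀ x, 0 ≤ J x x)
    (hJC : ∀ x, 0 ≤ J (C x) x) (hJCB : ∀ x, J (C x) x ≤ B₀ • ⟪x, x⟫) (x : H) :
    J (C x) x ≤ ‖C‖ • J x x :=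
  J.apply_map_self_le_opNorm_smul C (by positivity) hJ
    (fun y => norm_le_of_le_smul_inner_self (by positivity) (hJ y)
      (apply_self_le_smul_inner_self_of_controlled J C S hCS hB₀ hJ hJC hJCB y))
    hJC x

theorem frameForm_apply_self_nonneg (μ : Measure Ω) (F : Ω → H)
    (hF : ∀ f, Integrable (fun w => ⟪f, F w⟫ * ⟪F w, f⟫) μ) (f : H) :
    0 ≤ frameForm μ F hF f f := by
  rw [frameForm_apply]
  exact integral_nonneg fun w => show (0 : A) ≤ _ by
    simpa only [star_inner] using star_mul_self_nonneg ⟪F w, f⟫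

end RightCStarModule

theorem div_smul_le_of_smul_le_smul {E : Type*} [AddCommGroup E] [PartialOrder E]
    [IsOrderedAddMonoid E] [Module ℝ E] [IsOrderedModule ℝ E] {a b : E} {r c d : ℝ}
    (h : r • a ≤ c • b) (hb : 0 ≤ b) (hc : 0 ≤ c) (hcd : c ≤ d) : (r / d) • a ≤ b := by
  rcases (hc.trans hcd).eq_or_lt with hd | hd
  · simp [← hd, hb]
  · have hd' : 0 ≤ d⁻¹ := inv_nonneg.mpr hd.le
    calc (r / d) • a = d⁻¹ • r • a := by rw [smul_smul, div_eq_inv_mul]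
      _ ≤ d⁻¹ • c • b := smul_le_smul_of_nonneg_left h hd'
      _ ≤ d⁻¹ • d • b := smul_le_smul_of_nonneg_left (smul_le_smul_of_nonneg_right hcd hb) hd'
      _ = b := inv_smul_smul₀ hd.ne' b

theorem stmt7_general
    {A : Type*} [CStarAlgebra A] [PartialOrder A] [StarOrderedRing A]
    {H : Type*} [NormedAddCommGroup H] [NormedSpace ℂ H] [SMul Aᵐᵒᵖ H]
    [RightCStarModule A H]
    {Ω : Type*} [MeasurableSpace Ω] (μ : Measure Ω)
    -- `K ∈ End*_A(H)` with adjoint `Ks`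
    (Ks : H →L[ℂ] H)
    -- `C ∈ GL⁺(H)`, square roots `C^{1/2}` and `C^{-1/2}`
    (C Cinv Chalf Cinvhalf : H →L[ℂ] H)
    (hCinv₁ : C.comp Cinv = 1)
    (hCsa : ∀ x y : H, inner (𝕜 := A) (C x) y = inner (𝕜 := A) x (C y))
    (hChalf : Chalf.comp Chalf = C)
    (hChalfsa : ∀ x y : H, inner (𝕜 := A) (Chalf x) y = inner (𝕜 := A) x (Chalf y))
    (hCinvhalf : Cinvhalf.comp Cinvhalf = Cinv)
    -- `F` is a continuous `C`-controlled `K`-frame with bounds `A₀, B₀`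
    (F : Ω → H)
    (hFint : ∀ f : H,
      Integrable (fun w => inner (𝕜 := A) f (F w) * inner (𝕜 := A) (F w) f) μ)
    (A₀ B₀ : ℝ) (hA₀ : 0 < A₀) (hB₀ : 0 < B₀)
    (hframe : ∀ f : H,
      A₀ • inner (𝕜 := A) (Chalf (Ks f)) (Chalf (Ks f))
          ≤ (∫ w, inner (𝕜 := A) f (C (F w)) * inner (𝕜 := A) (F w) f ∂μ) ∧
      (∫ w, inner (𝕜 := A) f (C (F w)) * inner (𝕜 := A) (F w) f ∂μ)
          ≤ B₀ • inner (𝕜 := A) f f) :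
    -- `F` is a continuous `K`-frame with the indicated bounds
    ∀ f : H,
      (A₀ / (‖Cinvhalf‖ ^ 2 * ‖Chalf‖ ^ 2)) • inner (𝕜 := A) (Ks f) (Ks f)
          ≤ (∫ w, inner (𝕜 := A) f (F w) * inner (𝕜 := A) (F w) f ∂μ) ∧
      (∫ w, inner (𝕜 := A) f (F w) * inner (𝕜 := A) (F w) f ∂μ)
          ≤ (B₀ * ‖Cinvhalf‖ ^ 2) • inner (𝕜 := A) f f := by
  open RightCStarModule in
  set J := frameForm μ F hFint
  have hCCinv (x : H) : C (Cinv x) = x := DFunLike.congr_fun hCinv₁ x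
  have hChalf_inner (x : H) : inner (𝕜 := A) (Chalf x) (Chalf x) = inner (𝕜 := A) (C x) x := by
    rw [hChalfsa, ← ContinuousLinearMap.comp_apply, hChalf, hCsa]
  have hJC_lower (f : H) : A₀ • inner (𝕜 := A) (C (Ks f)) (Ks f) ≤ J (C f) f := by
    simpa only [integral_inner_map_mul_inner μ F hFint C hCsa, hChalf_inner] using (hframe f).1
  have hJC_upper (f : H) : J (C f) f ≤ B₀ • inner (𝕜 := A) f f := by
    simpa only [integral_inner_map_mul_inner μ F hFint C hCsa] using (hframe f).2
  have hJ_nonneg := frameForm_apply_self_nonneg μ F hFint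
  have hJC_nonneg (f : H) : 0 ≤ J (C f) f :=
    (smul_nonneg hA₀.le (hChalf_inner _ ▸ inner_self_nonneg)).trans (hJC_lower f)
  have hC_norm : ‖C‖ ≤ ‖Chalf‖ ^ 2 := by simpa [← hChalf, sq] using Chalf.opNorm_comp_le Chalf
  have hCinv_norm : ‖Cinv‖ ≤ ‖Cinvhalf‖ ^ 2 := by
    simpa [← hCinvhalf, sq] using Cinvhalf.opNorm_comp_le Cinvhalf
  intro f
  refine ⟨div_smul_le_of_smul_le_smul ?_ (hJ_nonneg f) (by positivity)
    (mul_le_mul hCinv_norm hC_norm (norm_nonneg _) (sq_nonneg _)), ?_⟩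
  · calc A₀ • inner (𝕜 := A) (Ks f) (Ks f)
        ≤ A₀ • ‖Cinv‖ • inner (𝕜 := A) (C (Ks f)) (Ks f) := smul_le_smul_of_nonneg_left
          (inner_self_le_opNorm_smul_inner_map C Cinv Chalf hCCinv hChalf_inner _) hA₀.le
      _ = ‖Cinv‖ • A₀ • inner (𝕜 := A) (C (Ks f)) (Ks f) := smul_comm _ _ _
      _ ≤ ‖Cinv‖ • ‖C‖ • J f f := smul_le_smul_of_nonneg_left ((hJC_lower f).trans
          (apply_map_self_le_opNorm_smul_of_controlled J C Cinv hCCinv hB₀.le hJ_nonneg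
            hJC_nonneg hJC_upper f)) (norm_nonneg _)
      _ = (‖Cinv‖ * ‖C‖) • J f f := smul_smul _ _ _
  · exact (apply_self_le_smul_inner_self_of_controlled J C Cinv hCCinv hB₀.le hJ_nonneg
      hJC_nonneg hJC_upper f).trans
      (smul_le_smul_of_nonneg_right (by nlinarith) inner_self_nonneg)

/-- Under `KC = CK` and the range condition `R(C^{1/2}) ⊆ R(K* C^{1/2})`
(closed), a continuous `C`-controlled `K`-frame with bounds `A₀, B₀` is a continuous `K`-frame
with bounds `a = A₀ ‖C^{-1/2}‖⁻² ‖C^{1/2}‖⁻²` and `b = B₀ ‖C^{-1/2}‖²`. -/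
theorem stmt7
    {A : Type*} [CStarAlgebra A] [PartialOrder A] [StarOrderedRing A]
    {H : Type*} [NormedAddCommGroup H] [NormedSpace ℂ H] [SMul Aᵐᵒᵖ H]
    [RightCStarModule A H] [CompleteSpace H]
    {Ω : Type*} [MeasurableSpace Ω] (μ : Measure Ω)
    -- `K ∈ End*_A(H)` with adjoint `Ks`
    (K Ks : H →L[ℂ] H)
    (hK : ∀ x y : H, inner (𝕜 := A) (K x) y = inner (𝕜 := A) x (Ks y))
    -- `C ∈ GL⁺(H)`, square roots `C^{1/2}` and `C^{-1/2}`
    (C Cinv Chalf Cinvhalf : H →L[ℂ] H)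
    (hCinv₁ : C.comp Cinv = 1) (hCinv₂ : Cinv.comp C = 1)
    (hCsa : ∀ x y : H, inner (𝕜 := A) (C x) y = inner (𝕜 := A) x (C y))
    (hCpos : ∀ x : H, (0 : A) ≤ inner (𝕜 := A) x (C x))
    (hChalf : Chalf.comp Chalf = C)
    (hChalfsa : ∀ x y : H, inner (𝕜 := A) (Chalf x) y = inner (𝕜 := A) x (Chalf y))
    (hChalfpos : ∀ x : H, (0 : A) ≤ inner (𝕜 := A) x (Chalf x))
    (hCinvhalf : Cinvhalf.comp Cinvhalf = Cinv)
    (hCinvhalfsa : ∀ x y : H, inner (𝕜 := A) (Cinvhalf x) y = inner (𝕜 := A) x (Cinvhalf y))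
    (hCinvhalfpos : ∀ x : H, (0 : A) ≤ inner (𝕜 := A) x (Cinvhalf x))
    -- `KC = CK` and the range condition
    (hCK : K.comp C = C.comp K)
    (hrange : Set.range Chalf ⊆ Set.range (Ks.comp Chalf))
    (hclosed : IsClosed (Set.range (Ks.comp Chalf)))
    -- `F` is a continuous `C`-controlled `K`-frame with bounds `A₀, B₀`
    (F : Ω → H)
    (hFmeas : ∀ f : H, StronglyMeasurable fun w => inner (𝕜 := A) f (F w))
    (hFint : ∀ f : H,
      Integrable (fun w => inner (𝕜 := A) f (F w) * inner (𝕜 := A) (F w) f) μ)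
    (A₀ B₀ : ℝ) (hA₀ : 0 < A₀) (hB₀ : 0 < B₀)
    (hframe : ∀ f : H,
      A₀ • inner (𝕜 := A) (Chalf (Ks f)) (Chalf (Ks f))
          ≤ (∫ w, inner (𝕜 := A) f (C (F w)) * inner (𝕜 := A) (F w) f ∂μ) ∧
      (∫ w, inner (𝕜 := A) f (C (F w)) * inner (𝕜 := A) (F w) f ∂μ)
          ≤ B₀ • inner (𝕜 := A) f f) :
    -- `F` is a continuous `K`-frame with the indicated bounds
    ∀ f : H,
      (A₀ / (‖Cinvhalf‖ ^ 2 * ‖Chalf‖ ^ 2)) • inner (𝕜 := A) (Ks f) (Ks f)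
          ≤ (∫ w, inner (𝕜 := A) f (F w) * inner (𝕜 := A) (F w) f ∂μ) ∧
      (∫ w, inner (𝕜 := A) f (F w) * inner (𝕜 := A) (F w) f ∂μ)
          ≤ (B₀ * ‖Cinvhalf‖ ^ 2) • inner (𝕜 := A) f f :=
  stmt7_general μ Ks C Cinv Chalf Cinvhalf hCinv₁ hCsa hChalf hChalfsa hCinvhalf F hFint A₀ B₀ hA₀
    hB₀ hframe
end

section
/- Let H be a Hilbert C*-module over a unital C*-algebra A, C ∈ GL⁺(H), and F : Ω → H a continuous C-controlled K-frame with bounds A₀ and B₀ for some K ∈ End*_A(H). Let M ∈ End*_A(H) with R(M) ⊆ R(K), R(K) closed, and suppose C commutes with M* and K*. Then F is a continuous C-controlled M-frame for H with bounds A₀/λ and B₀, where λ > 0 satisfies MM* ≤ λKK*. -/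
/-!
A self-adjoint adjointable operator `T` with `0 ≤ ⟪f, T f⟫` for all `f` is positive in the
C⋆-algebra of adjointable operators. Hence `C^{1/2}` is the functional-calculus square root of
`C` and commutes with every adjointable operator commuting with `C`, in particular with `K*` and
`M*`. With `g = C^{1/2} f` this gives
`⟪C^{1/2} M* f, C^{1/2} M* f⟫ = ⟪g, M M* g⟫ ≤ λ ⟪g, K K* g⟫ = λ ⟪C^{1/2} K* f, C^{1/2} K* f⟫`,
so the lower `K`-frame bound `A₀` yields the lower `M`-frame bound `A₀ / λ`.
-/

open MeasureTheory CStarModule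
open scoped RightActions

/-- The definition of a Hilbert C⋆-module as in the older Mathlib (right `Aᵐᵒᵖ`-action). -/
class CStarModuleOld (A E : outParam Type*) [NonUnitalSemiring A] [StarRing A] [Module ℂ A]
    [AddCommGroup E] [Module ℂ E] [PartialOrder A] [SMul Aᵐᵒᵖ E] [Norm A] [Norm E]
    extends Inner A E where
  inner_add_right {x} {y} {z} : inner x (y + z) = inner x y + inner x z
  inner_self_nonneg {x} : 0 ≤ inner x x
  inner_self {x} : inner x x = 0 ↔ x = 0
  inner_op_smul_right {a : A} {x y : E} : inner x (y <• a) = inner x y * a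
  inner_smul_right_complex {z : ℂ} {x} {y} : inner x (z • y) = z • inner x y
  star_inner x y : star (inner x y) = inner y x
  norm_eq_sqrt_norm_inner_self x : ‖x‖ = √‖inner x x‖

open scoped InnerProductSpace

/-- A right Hilbert `A`-module is a Hilbert `Aᵐᵒᵖ`-module in the sense of `CStarModule`, with
inner product `op ⟪x, y⟫_A`. -/
instance CStarModuleOld.toCStarModuleMulOpposite {A E : Type*} [NonUnitalCStarAlgebra A]
    [PartialOrder A] [AddCommGroup E] [Module ℂ E] [SMul Aᵐᵒᵖ E] [Norm E]
    [CStarModuleOld A E] : CStarModule Aᵐᵒᵖ E where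
  inner x y := MulOpposite.op (inner A x y)
  inner_add_right := congrArg MulOpposite.op CStarModuleOld.inner_add_right
  inner_self_nonneg := CStarModuleOld.inner_self_nonneg
  inner_self := (MulOpposite.op_eq_zero_iff _).trans CStarModuleOld.inner_self
  inner_op_smul_right := congrArg MulOpposite.op CStarModuleOld.inner_op_smul_right
  inner_smul_right_complex := congrArg MulOpposite.op CStarModuleOld.inner_smul_right_complex
  star_inner x y := congrArg MulOpposite.op (CStarModuleOld.star_inner x y)
  norm_eq_sqrt_norm_inner_self := CStarModuleOld.norm_eq_sqrt_norm_inner_self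

lemma commute_of_commute_mul_self {A : Type*} [CStarAlgebra A] [PartialOrder A]
    [StarOrderedRing A] {s b : A} (hs : 0 ≤ s) (h : Commute (s * s) b) : Commute s b := by
  rw [← CFC.sqrt_mul_self s hs, CFC.sqrt_eq_cfc]
  exact h.cfc_nnreal _

noncomputable section

variable {B E : Type*} [CStarAlgebra B] [PartialOrder B]
  [NormedAddCommGroup E] [NormedSpace ℂ E] [SMul B E] [CStarModule B E]

variable (B E) in
structure AdjointableOp where
  toCLM : E →L[ℂ] E
  adj : E →L[ℂ] E
  inner_toCLM_left (x y : E) : ⟪toCLM x, y⟫_B = ⟪x, adj y⟫_B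

namespace AdjointableOp

lemma inner_adj_left (a : AdjointableOp B E) (x y : E) : ⟪a.adj x, y⟫_B = ⟪x, a.toCLM y⟫_B := by
  rw [← star_inner, ← a.inner_toCLM_left, star_inner]

lemma adj_unique {S T T' : E →L[ℂ] E} (hT : ∀ x y, ⟪S x, y⟫_B = ⟪x, T y⟫_B)
    (hT' : ∀ x y, ⟪S x, y⟫_B = ⟪x, T' y⟫_B) : T = T' := by
  ext y
  rw [← sub_eq_zero, ← inner_self (A := B)]
  simp only [← innerₛₗ_apply, map_sub, LinearMap.sub_apply]
  simp only [innerₛₗ_apply, ← hT, ← hT', sub_self]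

@[ext] lemma ext {a b : AdjointableOp B E} (h : a.toCLM = b.toCLM) : a = b := by
  obtain ⟨S, T, hT⟩ := a
  obtain ⟨S', T', hT'⟩ := b
  subst h
  obtain rfl := adj_unique hT hT'
  rfl

lemma toCLM_injective : Function.Injective (toCLM : AdjointableOp B E → E →L[ℂ] E) :=
  fun _ _ => ext

instance : Zero (AdjointableOp B E) := ⟨⟨0, 0, by simp⟩⟩
instance : One (AdjointableOp B E) := ⟨⟨1, 1, by simp⟩⟩
instance : Add (AdjointableOp B E) :=
  ⟨fun a b => ⟨a.toCLM + b.toCLM, a.adj + b.adj, fun x y => by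
    simp [CStarModule.inner_add_left, a.inner_toCLM_left, b.inner_toCLM_left]⟩⟩
instance : Mul (AdjointableOp B E) :=
  ⟨fun a b => ⟨a.toCLM * b.toCLM, b.adj * a.adj, fun _ _ =>
    (a.inner_toCLM_left _ _).trans (b.inner_toCLM_left _ _)⟩⟩
instance : SMul ℂ (AdjointableOp B E) :=
  ⟨fun z a => ⟨z • a.toCLM, star z • a.adj, fun x y => by
    simp [inner_smul_left_complex, a.inner_toCLM_left]⟩⟩
instance : Neg (AdjointableOp B E) := ⟨fun a => (-1 : ℂ) • a⟩
instance : Sub (AdjointableOp B E) := ⟨fun a b => a + -b⟩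
instance : SMul ℕ (AdjointableOp B E) := ⟨fun n a => (n : ℂ) • a⟩
instance : SMul ℤ (AdjointableOp B E) := ⟨fun n a => (n : ℂ) • a⟩
instance : NatCast (AdjointableOp B E) := ⟨fun n => (n : ℂ) • 1⟩
instance : IntCast (AdjointableOp B E) := ⟨fun n => (n : ℂ) • 1⟩
instance : Pow (AdjointableOp B E) ℕ := ⟨fun a n => npowRec n a⟩

lemma toCLM_neg (a : AdjointableOp B E) : (-a).toCLM = -a.toCLM := neg_one_smul ℂ _

instance : Ring (AdjointableOp B E) :=
  toCLM_injective.ring _ rfl rfl (fun _ _ => rfl) (fun _ _ => rfl) toCLM_neg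
    (fun a b => (congrArg (a.toCLM + ·) (toCLM_neg b)).trans (sub_eq_add_neg _ _).symm)
    (fun n a => Nat.cast_smul_eq_nsmul ℂ n a.toCLM)
    (fun n a => Int.cast_smul_eq_zsmul ℂ n a.toCLM)
    (fun a n => by
      induction n with
      | zero => rfl
      | succ n ih => exact (congrArg (· * a.toCLM) ih).trans (pow_succ _ n).symm)
    (fun n => (Nat.cast_smul_eq_nsmul ℂ n _).trans (nsmul_one n))
    (fun n => (Int.cast_smul_eq_zsmul ℂ n _).trans (zsmul_one n))

def toCLMRingHom : AdjointableOp B E →+* (E →L[ℂ] E) where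
  toFun := toCLM
  map_one' := rfl
  map_mul' _ _ := rfl
  map_zero' := rfl
  map_add' _ _ := rfl

instance : NormedRing (AdjointableOp B E) :=
  NormedRing.induced _ _ toCLMRingHom toCLM_injective

instance : Module ℂ (AdjointableOp B E) :=
  toCLM_injective.module ℂ toCLMRingHom.toAddMonoidHom fun _ _ => rfl

instance : Algebra ℂ (AdjointableOp B E) :=
  Algebra.ofModule (fun z a b => ext (smul_mul_assoc z a.toCLM b.toCLM))
    (fun z a b => ext (mul_smul_comm z a.toCLM b.toCLM))

instance : NormedAlgebra ℂ (AdjointableOp B E) where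
  norm_smul_le z a := norm_smul_le z a.toCLM

instance : StarRing (AdjointableOp B E) where
  star a := ⟨a.adj, a.toCLM, a.inner_adj_left⟩
  star_involutive _ := rfl
  star_mul _ _ := rfl
  star_add _ _ := rfl

instance : StarModule ℂ (AdjointableOp B E) where
  star_smul _ _ := ext rfl

lemma inner_star_mul_self (t : AdjointableOp B E) (f : E) :
    ⟪f, (star t * t).toCLM f⟫_B = ⟪t.toCLM f, t.toCLM f⟫_B :=
  (t.inner_toCLM_left _ _).symm

lemma inner_star_mul_mul_self (b a : AdjointableOp B E) (f : E) :
    ⟪f, (star b * a * b).toCLM f⟫_B = ⟪b.toCLM f, a.toCLM (b.toCLM f)⟫_B :=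
  (b.inner_toCLM_left _ _).symm

lemma eq_zero_of_inner_star_mul_self_nonpos {t : AdjointableOp B E}
    (h : ∀ f, ⟪f, (star t * t).toCLM f⟫_B ≤ 0) : t = 0 := by
  ext f
  refine (inner_self (A := B)).mp (le_antisymm ?_ inner_self_nonneg)
  rw [← inner_star_mul_self]
  exact h f

def toProd : AdjointableOp B E →+ (E →L[ℂ] E) × (E →L[ℂ] E) where
  toFun a := (a.toCLM, a.adj)
  map_zero' := rfl
  map_add' _ _ := rfl

lemma range_toProd :
    Set.range (toProd : AdjointableOp B E → _) = {p | ∀ x y, ⟪p.1 x, y⟫_B = ⟪x, p.2 y⟫_B} :=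
  Set.ext fun p => ⟨by rintro ⟨a, rfl⟩; exact a.inner_toCLM_left, fun h => ⟨⟨p.1, p.2, h⟩, rfl⟩⟩

variable [StarOrderedRing B]

lemma norm_toCLM_sq_le (a : AdjointableOp B E) : ‖a.toCLM‖ ^ 2 ≤ ‖a.adj * a.toCLM‖ := by
  set c := ‖a.adj * a.toCLM‖
  have hc : 0 ≤ c := norm_nonneg _
  have h : ∀ v, ‖a.toCLM v‖ ≤ √c * ‖v‖ := fun v => by
    rw [← Real.sqrt_sq (norm_nonneg v), ← Real.sqrt_mul hc]
    refine (Real.le_sqrt (norm_nonneg _) (by positivity)).mpr ?_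
    calc ‖a.toCLM v‖ ^ 2 = ‖⟪v, a.adj (a.toCLM v)⟫_B‖ := by
          rw [norm_sq_eq B, a.inner_toCLM_left]
      _ ≤ ‖v‖ * ‖(a.adj * a.toCLM) v‖ := norm_inner_le E
      _ ≤ ‖v‖ * (c * ‖v‖) := by gcongr; exact (a.adj * a.toCLM).le_opNorm v
      _ = c * ‖v‖ ^ 2 := by ring
  calc ‖a.toCLM‖ ^ 2 ≤ √c ^ 2 := by
        gcongr; exact a.toCLM.opNorm_le_bound (Real.sqrt_nonneg c) h
    _ = c := Real.sq_sqrt hc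

instance : CStarRing (AdjointableOp B E) where
  norm_mul_self_le a := (sq ‖a.toCLM‖).symm.trans_le a.norm_toCLM_sq_le

lemma isometry_toProd : Isometry (toProd : AdjointableOp B E → _) :=
  AddMonoidHomClass.isometry_of_norm _ fun a => by
    rw [Prod.norm_def]
    change max ‖a‖ ‖star a‖ = ‖a‖
    rw [norm_star, max_self]

lemma isClosed_range_toProd : IsClosed (Set.range (toProd : AdjointableOp B E → _)) := by
  rw [range_toProd]
  simp only [Set.ofPred_forall]
  exact isClosed_iInter fun x => isClosed_iInter fun y => isClosed_eq (by fun_prop) (by fun_prop)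

variable [CompleteSpace E]

instance : CompleteSpace (AdjointableOp B E) :=
  (completeSpace_iff_isComplete_range isometry_toProd.isUniformInducing).mpr
    isClosed_range_toProd.isComplete

instance : CStarAlgebra (AdjointableOp B E) where

instance : PartialOrder (AdjointableOp B E) := CStarAlgebra.spectralOrder _

instance : StarOrderedRing (AdjointableOp B E) := CStarAlgebra.spectralOrderedRing _

/-- With `t = a⁻` and `n = √t` we have `n a n = -t²`, so `⟪t f, t f⟫ = -⟪n f, a (n f)⟫ ≤ 0`
forces `t = 0`. -/
lemma nonneg_of_inner_nonneg {a : AdjointableOp B E} (ha : IsSelfAdjoint a)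
    (h : ∀ f, 0 ≤ ⟪f, a.toCLM f⟫_B) : 0 ≤ a := by
  set neg : ℝ → ℝ := fun r => max (-r) 0
  set n := cfc (fun r => √(neg r)) a
  set t := cfc neg a
  have hn : IsSelfAdjoint n := cfc_predicate _ _
  have ht : IsSelfAdjoint t := cfc_predicate _ _
  have hnan : star n * a * n = -(star t * t) := by
    rw [hn.star_eq, ht.star_eq]
    calc n * a * n = cfc (fun r => √(neg r) * r * √(neg r)) a := by
          rw [cfc_mul (fun r => √(neg r) * r) _ a, cfc_mul _ (fun r => r) a, cfc_id' ℝ a]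
      _ = cfc (fun r => -(neg r * neg r)) a := cfc_congr fun r _ => by
          rw [mul_right_comm, Real.mul_self_sqrt (le_max_right _ _)]
          rcases le_total r 0 with hr | hr <;> simp [neg, hr]
      _ = -(t * t) := by rw [cfc_neg, cfc_mul neg neg a]
  have ht0 : t = 0 := eq_zero_of_inner_star_mul_self_nonpos fun f => by
    have := h (n.toCLM f)
    rwa [← inner_star_mul_mul_self, hnan, toCLM_neg, neg_apply, ← innerₛₗ_apply, map_neg,
      neg_nonneg] at this
  rw [StarOrderedRing.nonneg_iff_spectrum_nonneg (R := ℝ) a]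
  intro r hr
  have := (cfc_eq_cfc_iff_eqOn (a := a) (f := neg) (g := 0)).mp
    (ht0.trans (cfc_zero ℝ a).symm) hr
  simpa [neg] using this

end AdjointableOp

lemma inner_adj_apply_self {S T : E →L[ℂ] E} (hST : ∀ x y, ⟪S x, y⟫_B = ⟪x, T y⟫_B) (g : E) :
    ⟪T g, T g⟫_B = ⟪g, S (T g)⟫_B := by
  rw [← star_inner (S (T g)) g, hST, star_inner]

lemma inner_apply_adj_le_smul_of_commute {P K Ks M Ms : E →L[ℂ] E}
    (hK : ∀ x y, ⟪K x, y⟫_B = ⟪x, Ks y⟫_B) (hM : ∀ x y, ⟪M x, y⟫_B = ⟪x, Ms y⟫_B)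
    (hPK : Commute P Ks) (hPM : Commute P Ms) {lam : ℝ}
    (hMK : ∀ f, ⟪f, M (Ms f)⟫_B ≤ lam • ⟪f, K (Ks f)⟫_B) (f : E) :
    ⟪P (Ms f), P (Ms f)⟫_B ≤ lam • ⟪P (Ks f), P (Ks f)⟫_B := by
  have hPKs : P (Ks f) = Ks (P f) := DFunLike.congr_fun hPK.eq f
  have hPMs : P (Ms f) = Ms (P f) := DFunLike.congr_fun hPM.eq f
  rw [hPKs, hPMs, inner_adj_apply_self hK, inner_adj_apply_self hM]
  exact hMK (P f)

variable [StarOrderedRing B] [CompleteSpace E]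

lemma commute_of_commute_mul_self_of_inner_nonneg {P S T : E →L[ℂ] E}
    (hP : ∀ x y, ⟪P x, y⟫_B = ⟪x, P y⟫_B) (hP_nonneg : ∀ x, 0 ≤ ⟪x, P x⟫_B)
    (hST : ∀ x y, ⟪S x, y⟫_B = ⟪x, T y⟫_B) (h : Commute (P * P) T) : Commute P T := by
  let p : AdjointableOp B E := ⟨P, P, hP⟩
  let t : AdjointableOp B E := star ⟨S, T, hST⟩
  have hp : 0 ≤ p := AdjointableOp.nonneg_of_inner_nonneg rfl hP_nonneg
  have hpt : Commute (p * p) t := AdjointableOp.ext h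
  exact congrArg AdjointableOp.toCLM (commute_of_commute_mul_self hp hpt)

end

theorem stmt9_general
    {A : Type*} [CStarAlgebra A] [PartialOrder A] [StarOrderedRing A]
    {H : Type*} [NormedAddCommGroup H] [NormedSpace ℂ H] [SMul Aᵐᵒᵖ H]
    [CStarModuleOld A H] [CompleteSpace H]
    {Ω : Type*} [MeasurableSpace Ω] (μ : Measure Ω)
    -- `K, M ∈ End*_A(H)` with adjoints `Ks, Ms`
    (K Ks M Ms : H →L[ℂ] H)
    (hK : ∀ x y : H, inner (𝕜 := A) (K x) y = inner (𝕜 := A) x (Ks y))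
    (hM : ∀ x y : H, inner (𝕜 := A) (M x) y = inner (𝕜 := A) x (Ms y))
    -- `C ∈ GL⁺(H)` with positive square root `Chalf`
    (C Chalf : H →L[ℂ] H)
    (hChalf : Chalf.comp Chalf = C)
    (hChalfsa : ∀ x y : H, inner (𝕜 := A) (Chalf x) y = inner (𝕜 := A) x (Chalf y))
    (hChalfpos : ∀ x : H, (0 : A) ≤ inner (𝕜 := A) x (Chalf x))
    -- `C` commutes with `M*` and `K*`
    (hCMs : C.comp Ms = Ms.comp C) (hCKs : C.comp Ks = Ks.comp C)
    -- `λ > 0` with `M M* ≤ λ K K*`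
    (lam : ℝ) (hlam : 0 < lam)
    (hMMKK : ∀ f : H,
      inner (𝕜 := A) f (M (Ms f)) ≤ lam • inner (𝕜 := A) f (K (Ks f)))
    -- `F` is a continuous `C`-controlled `K`-frame with bounds `A₀, B₀`
    (F : Ω → H)
    (A₀ B₀ : ℝ) (hA₀ : 0 < A₀)
    (hframe : ∀ f : H,
      A₀ • inner (𝕜 := A) (Chalf (Ks f)) (Chalf (Ks f))
          ≤ (∫ w, inner (𝕜 := A) f (C (F w)) * inner (𝕜 := A) (F w) f ∂μ) ∧
      (∫ w, inner (𝕜 := A) f (C (F w)) * inner (𝕜 := A) (F w) f ∂μ)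
          ≤ B₀ • inner (𝕜 := A) f f) :
    -- `F` is a continuous `C`-controlled `M`-frame with bounds `A₀/λ` and `B₀`
    ∀ f : H,
      (A₀ / lam) • inner (𝕜 := A) (Chalf (Ms f)) (Chalf (Ms f))
          ≤ (∫ w, inner (𝕜 := A) f (C (F w)) * inner (𝕜 := A) (F w) f ∂μ) ∧
      (∫ w, inner (𝕜 := A) f (C (F w)) * inner (𝕜 := A) (F w) f ∂μ)
          ≤ B₀ • inner (𝕜 := A) f f := by
  intro f
  subst hChalf
  have hP : ∀ x y, ⟪Chalf x, y⟫_Aᵐᵒᵖ = ⟪x, Chalf y⟫_Aᵐᵒᵖ := fun x y =>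
    congrArg MulOpposite.op (hChalfsa x y)
  have hK' : ∀ x y, ⟪K x, y⟫_Aᵐᵒᵖ = ⟪x, Ks y⟫_Aᵐᵒᵖ := fun x y => congrArg MulOpposite.op (hK x y)
  have hM' : ∀ x y, ⟪M x, y⟫_Aᵐᵒᵖ = ⟪x, Ms y⟫_Aᵐᵒᵖ := fun x y => congrArg MulOpposite.op (hM x y)
  have hPKs := commute_of_commute_mul_self_of_inner_nonneg hP hChalfpos hK' hCKs
  have hPMs := commute_of_commute_mul_self_of_inner_nonneg hP hChalfpos hM' hCMs
  have key : ⟪Chalf (Ms f), Chalf (Ms f)⟫_A ≤ lam • ⟪Chalf (Ks f), Chalf (Ks f)⟫_A :=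
    inner_apply_adj_le_smul_of_commute hK' hM' hPKs hPMs hMMKK f
  refine ⟨?_, (hframe f).2⟩
  calc (A₀ / lam) • ⟪Chalf (Ms f), Chalf (Ms f)⟫_A
      ≤ (A₀ / lam) • lam • ⟪Chalf (Ks f), Chalf (Ks f)⟫_A :=
        smul_le_smul_of_nonneg_left key (by positivity)
    _ = A₀ • ⟪Chalf (Ks f), Chalf (Ks f)⟫_A := by rw [smul_smul, div_mul_cancel₀ A₀ hlam.ne']
    _ ≤ _ := (hframe f).1

/-- If `F` is a continuous `C`-controlled `K`-frame with bounds `A₀, B₀`,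
`M ∈ End*_A(H)` with `R(M) ⊆ R(K)`, `R(K)` closed, and `C` commutes with `M*` and `K*`, then
`F` is a continuous `C`-controlled `M`-frame with bounds `A₀/λ` and `B₀`, where `λ > 0`
satisfies `M M* ≤ λ K K*`. -/
theorem stmt9
    {A : Type*} [CStarAlgebra A] [PartialOrder A] [StarOrderedRing A]
    {H : Type*} [NormedAddCommGroup H] [NormedSpace ℂ H] [SMul Aᵐᵒᵖ H]
    [CStarModuleOld A H] [CompleteSpace H]
    {Ω : Type*} [MeasurableSpace Ω] (μ : Measure Ω)
    -- `K, M ∈ End*_A(H)` with adjoints `Ks, Ms`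
    (K Ks M Ms : H →L[ℂ] H)
    (hK : ∀ x y : H, inner (𝕜 := A) (K x) y = inner (𝕜 := A) x (Ks y))
    (hM : ∀ x y : H, inner (𝕜 := A) (M x) y = inner (𝕜 := A) x (Ms y))
    -- `C ∈ GL⁺(H)` with positive square root `Chalf`
    (C Cinv Chalf : H →L[ℂ] H)
    (hCinv₁ : C.comp Cinv = 1) (hCinv₂ : Cinv.comp C = 1)
    (hCsa : ∀ x y : H, inner (𝕜 := A) (C x) y = inner (𝕜 := A) x (C y))
    (hCpos : ∀ x : H, (0 : A) ≤ inner (𝕜 := A) x (C x))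
    (hChalf : Chalf.comp Chalf = C)
    (hChalfsa : ∀ x y : H, inner (𝕜 := A) (Chalf x) y = inner (𝕜 := A) x (Chalf y))
    (hChalfpos : ∀ x : H, (0 : A) ≤ inner (𝕜 := A) x (Chalf x))
    -- `C` commutes with `M*` and `K*`
    (hCMs : C.comp Ms = Ms.comp C) (hCKs : C.comp Ks = Ks.comp C)
    -- `R(M) ⊆ R(K)` with `R(K)` closed
    (hrange : Set.range M ⊆ Set.range K)
    (hclosed : IsClosed (Set.range K))
    -- `λ > 0` with `M M* ≤ λ K K*`
    (lam : ℝ) (hlam : 0 < lam)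
    (hMMKK : ∀ f : H,
      inner (𝕜 := A) f (M (Ms f)) ≤ lam • inner (𝕜 := A) f (K (Ks f)))
    -- `F` is a continuous `C`-controlled `K`-frame with bounds `A₀, B₀`
    (F : Ω → H)
    (hFmeas : ∀ f : H, StronglyMeasurable fun w => inner (𝕜 := A) f (F w))
    (A₀ B₀ : ℝ) (hA₀ : 0 < A₀) (hB₀ : 0 < B₀)
    (hframe : ∀ f : H,
      A₀ • inner (𝕜 := A) (Chalf (Ks f)) (Chalf (Ks f))
          ≤ (∫ w, inner (𝕜 := A) f (C (F w)) * inner (𝕜 := A) (F w) f ∂μ) ∧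
      (∫ w, inner (𝕜 := A) f (C (F w)) * inner (𝕜 := A) (F w) f ∂μ)
          ≤ B₀ • inner (𝕜 := A) f f) :
    -- `F` is a continuous `C`-controlled `M`-frame with bounds `A₀/λ` and `B₀`
    ∀ f : H,
      (A₀ / lam) • inner (𝕜 := A) (Chalf (Ms f)) (Chalf (Ms f))
          ≤ (∫ w, inner (𝕜 := A) f (C (F w)) * inner (𝕜 := A) (F w) f ∂μ) ∧
      (∫ w, inner (𝕜 := A) f (C (F w)) * inner (𝕜 := A) (F w) f ∂μ)
          ≤ B₀ • inner (𝕜 := A) f f :=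
  stmt9_general μ K Ks M Ms hK hM C Chalf hChalf hChalfsa hChalfpos hCMs hCKs lam hlam hMMKK F A₀ B₀
    hA₀ hframe
end
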